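/- Let C be a category with a terminal object I and binary products, and let A, B be objects built as iterated products of pairwise distinct 'letter' objects p_1, …, p_n and copies of I (each p_i occurring exactly once in A). If f, g : A → B are both composites of canonical structural morphisms (identities, projections, terminal maps, diagonals, pairings of canonical morphisms) and the induced functions from letter-occurrences of B to letter-occurrences of A agree, then f = g. In particular, in the free cartesian category on a set of generators, any two morphisms with a diversified domain and the same graph are equal. -/
import Mathlib


/-- Objects of the free cartesian category on generators `P`:
terms built from letters and `I` by a binary product operation. -/
inductive CObj (P : Type) where
  | letter : P → CObj P
  | unit : CObj P
  | prod : CObj P → CObj P → CObj P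

/-- The list of letter-occurrences of an object, from left to right. -/
def occ {P : Type} : CObj P → List P
  | .letter p => [p]
  | .unit => []
  | .prod A B => occ A ++ occ B

/-- The number of letter-occurrences of an object. -/
def len {P : Type} : CObj P → ℕ
  | .letter _ => 1
  | .unit => 0
  | .prod A B => len A + len B

/-- Canonical (structural) morphism terms of the free cartesian category:
identities, composites, projections, terminal maps and pairings. -/
inductive CTerm {P : Type} : CObj P → CObj P → Type where
  | id (A : CObj P) : CTerm A A
  | comp {A B C : CObj P} : CTerm B C → CTerm A B → CTerm A C
  | fst (A B : CObj P) : CTerm (.prod A B) A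
  | snd (A B : CObj P) : CTerm (.prod A B) B
  | bang (A : CObj P) : CTerm A .unit
  | pair {X A B : CObj P} : CTerm X A → CTerm X B → CTerm X (.prod A B)

/-- The graph of a morphism term: the induced function from letter-occurrences
of the codomain to letter-occurrences of the domain. -/
def graph {P : Type} : {A B : CObj P} → CTerm A B → (Fin (len B) → Fin (len A))
  | _, _, .id _ => fun i => i
  | _, _, .comp f g => graph g ∘ graph f
  | _, _, .fst A B => fun i => (Fin.castAdd (len B) i : Fin (len A + len B))
  | _, _, .snd A B => fun i => (Fin.natAdd (len A) i : Fin (len A + len B))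
  | _, _, .bang _ => Fin.elim0
  | X, _, .pair f g => Fin.addCases (motive := fun _ => Fin (len X)) (graph f) (graph g)

/-- Equality of morphism terms generated by the cartesian equations:
the categorial equations, terminality of `I` and the universal property
of the binary product. -/
inductive CartEq {P : Type} : {A B : CObj P} → CTerm A B → CTerm A B → Prop where
  | refl {A B : CObj P} (f : CTerm A B) : CartEq f f
  | symm {A B : CObj P} {f g : CTerm A B} : CartEq f g → CartEq g f
  | trans {A B : CObj P} {f g h : CTerm A B} : CartEq f g → CartEq g h → CartEq f h
  | compCongr {A B C : CObj P} {f f' : CTerm B C} {g g' : CTerm A B} :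
      CartEq f f' → CartEq g g' → CartEq (.comp f g) (.comp f' g')
  | pairCongr {X A B : CObj P} {f f' : CTerm X A} {g g' : CTerm X B} :
      CartEq f f' → CartEq g g' → CartEq (.pair f g) (.pair f' g')
  | idLeft {A B : CObj P} (f : CTerm A B) : CartEq (.comp (.id B) f) f
  | idRight {A B : CObj P} (f : CTerm A B) : CartEq (.comp f (.id A)) f
  | assoc {A B C D : CObj P} (f : CTerm A B) (g : CTerm B C) (h : CTerm C D) :
      CartEq (.comp h (.comp g f)) (.comp (.comp h g) f)
  | bangUnique {A : CObj P} (f : CTerm A .unit) : CartEq f (.bang A)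
  | fstPair {X A B : CObj P} (f : CTerm X A) (g : CTerm X B) :
      CartEq (.comp (.fst A B) (.pair f g)) f
  | sndPair {X A B : CObj P} (f : CTerm X A) (g : CTerm X B) :
      CartEq (.comp (.snd A B) (.pair f g)) g
  | pairEta {X A B : CObj P} (h : CTerm X (.prod A B)) :
      CartEq (.pair (.comp (.fst A B) h) (.comp (.snd A B) h)) h

/-- `Sel j f` : `f` is the canonical selection of the `j`-th letter occurrence. -/
inductive Sel {P : Type} : {A : CObj P} → {p : P} → ℕ → CTerm A (.letter p) → Prop where
  | letter (p : P) : Sel 0 (.id (.letter p))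
  | left {A B : CObj P} {p : P} {j : ℕ} {f : CTerm A (.letter p)} :
      Sel j f → Sel (A := .prod A B) j (f.comp (.fst A B))
  | right {A B : CObj P} {p : P} {j : ℕ} {f : CTerm B (.letter p)} :
      Sel j f → Sel (A := .prod A B) (len A + j) (f.comp (.snd A B))

theorem Sel.lt {P : Type} {A : CObj P} {p : P} {j : ℕ} {f : CTerm A (.letter p)}
    (h : Sel j f) : j < len A := by
  induction h with
  | letter => simp [len]
  | left _ ih => simp only [len]; omega
  | right _ ih => simp only [len]; omega

theorem Sel.unique {P : Type} {A : CObj P} {p q : P} {j : ℕ}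
    {f : CTerm A (.letter p)} {g : CTerm A (.letter q)}
    (hf : Sel j f) (hg : Sel j g) : ∃ h : p = q, HEq f g := by
  induction hf with
  | letter p =>
      cases hg
      exact ⟨rfl, HEq.rfl⟩
  | left hf' ih =>
      cases hg with
      | left hg' =>
          obtain ⟨rfl, hh⟩ := ih hg'
          cases hh
          exact ⟨rfl, HEq.rfl⟩
      | right hg' => exact absurd hf'.lt (by omega)
  | @right A1 B1 p1 j1 f1 hf' ih =>
      generalize hn : len A1 + j1 = n at hg
      cases hg with
      | left hg' => exact absurd hg'.lt (by omega)
      | @right A2 B2 p2 j2 g1 hg' =>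
          obtain rfl : j1 = j2 := by omega
          obtain ⟨rfl, hh⟩ := ih hg'
          cases hh
          exact ⟨rfl, HEq.rfl⟩

theorem selComp {P : Type} {A B : CObj P} (f : CTerm A B) :
    ∀ {p : P} {i : Fin (len B)} {s : CTerm B (.letter p)}, Sel i.val s →
      ∃ t : CTerm A (.letter p), Sel (graph f i).val t ∧ CartEq (s.comp f) t := by
  induction f with
  | id A =>
      intro p i s hs
      exact ⟨s, hs, CartEq.idRight s⟩
  | comp u v ihu ihv =>
      intro p i s hs
      obtain ⟨t1, ht1, he1⟩ := ihu hs
      obtain ⟨t2, ht2, he2⟩ := ihv ht1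
      refine ⟨t2, ?_, ?_⟩
      · simpa [graph] using ht2
      · exact CartEq.trans
          (CartEq.trans (CartEq.assoc _ _ _) (CartEq.compCongr he1 (CartEq.refl _))) he2
  | fst A B =>
      intro p i s hs
      exact ⟨s.comp (.fst A B), Sel.left hs, CartEq.refl _⟩
  | snd A B =>
      intro p i s hs
      exact ⟨s.comp (.snd A B), Sel.right hs, CartEq.refl _⟩
  | bang A =>
      intro p i s hs
      exact i.elim0
  | pair u v ihu ihv =>
      intro p i s hs
      obtain ⟨n, hni⟩ : ∃ n, i.val = n := ⟨i.val, rfl⟩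
      rw [hni] at hs
      cases hs with
      | left hs' =>
          have hlt : n < _ := hs'.lt
          obtain ⟨t, ht, he⟩ := ihu (i := ⟨n, hlt⟩) hs'
          refine ⟨t, ?_, ?_⟩
          · have hi : i = Fin.castAdd _ ⟨n, hlt⟩ := by
              apply Fin.ext; simpa using hni
            rw [hi]
            simpa only [graph, Fin.addCases_left] using ht
          · exact CartEq.trans (CartEq.symm (CartEq.assoc _ _ _))
              (CartEq.trans (CartEq.compCongr (CartEq.refl _) (CartEq.fstPair u v)) he)
      | @right _ _ _ j s2 hs' =>
          have hlt : j < _ := hs'.lt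
          obtain ⟨t, ht, he⟩ := ihv (i := ⟨j, hlt⟩) hs'
          refine ⟨t, ?_, ?_⟩
          · have hi : i = Fin.natAdd _ ⟨j, hlt⟩ := by
              apply Fin.ext; simpa [Fin.natAdd] using hni
            rw [hi]
            simpa only [graph, Fin.addCases_right] using ht
          · exact CartEq.trans (CartEq.symm (CartEq.assoc _ _ _))
              (CartEq.trans (CartEq.compCongr (CartEq.refl _) (CartEq.sndPair u v)) he)

theorem letterCase {P : Type} {A : CObj P} {p : P} (f g : CTerm A (.letter p))
    (h : graph f = graph g) : CartEq f g := by
  have h0 : Sel ((⟨0, Nat.one_pos⟩ : Fin (len (CObj.letter p)))).val (CTerm.id (.letter p)) := Sel.letter p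
  obtain ⟨t, ht, he⟩ := selComp f h0
  obtain ⟨t', ht', he'⟩ := selComp g h0
  rw [h] at ht
  obtain ⟨_, hh⟩ := Sel.unique ht ht'
  cases hh
  have hf : CartEq f t := CartEq.trans (CartEq.symm (CartEq.idLeft f)) he
  have hg : CartEq g t := CartEq.trans (CartEq.symm (CartEq.idLeft g)) he'
  exact CartEq.trans hf (CartEq.symm hg)

/-- Coherence for cartesian categories: any two canonical morphisms of the free
cartesian category with a diversified domain and the same graph are equal. -/
theorem stmt15 {P : Type} {A B : CObj P} (hA : (occ A).Nodup)
    (f g : CTerm A B) (h : graph f = graph g) : CartEq f g := by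
  clear hA
  induction B with
  | letter p => exact letterCase f g h
  | unit => exact CartEq.trans (CartEq.bangUnique f) (CartEq.symm (CartEq.bangUnique g))
  | prod B1 B2 ih1 ih2 =>
      have h1 : graph ((CTerm.fst B1 B2).comp f) = graph ((CTerm.fst B1 B2).comp g) := by
        funext i; simp [graph, h]
      have h2 : graph ((CTerm.snd B1 B2).comp f) = graph ((CTerm.snd B1 B2).comp g) := by
        funext i; simp [graph, h]
      exact CartEq.trans (CartEq.symm (CartEq.pairEta f))
        (CartEq.trans (CartEq.pairCongr (ih1 _ _ h1) (ih2 _ _ h2)) (CartEq.pairEta g))
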